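/- Let α ∈ ℝ^s be totally irrational and let A be a special region for α with associated lattice M generated by φ(v_1), …, φ(v_s) and β = φ(v_{s+1}). Then for every x ∈ A (not just points in the orbit of 0), the first return map S of the rotation by α to A satisfies S(x) ≡ x + β mod M. -/

import Mathlib

open MeasureTheory

noncomputable section

/-- Embedding of an integer vector into `ℝ^s`. -/
def intVec (s : ℕ) (m : Fin s → ℤ) : Fin s → ℝ := fun i => (m i : ℝ)

/-- `y` belongs to `A` modulo `ℤ^s`. -/
def ModMem (s : ℕ) (y : Fin s → ℝ) (A : Set (Fin s → ℝ)) : Prop :=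
  ∃ m : Fin s → ℤ, y + intVec s m ∈ A

/-- `α` is totally irrational: `1, α 0, …, α (s-1)` are `ℚ`-linearly independent. -/
def TotallyIrrational (s : ℕ) (α : Fin s → ℝ) : Prop :=
  ∀ (m : Fin s → ℤ) (n : ℤ), (∑ i, (m i : ℝ) * α i) + (n : ℝ) = 0 → m = 0 ∧ n = 0

/-- `A ⊆ 𝕋^s` (given by a lift in `ℝ^s`) is a bounded remainder set for the
rotation by `α`. -/
def IsBRS (s : ℕ) (α : Fin s → ℝ) (A : Set (Fin s → ℝ)) : Prop :=
  ∃ C : ℝ, ∀ (x : Fin s → ℝ) (N : ℕ),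
    |(∑ n ∈ Finset.range N,
        Set.indicator {y : Fin s → ℝ | ModMem s y A} (fun _ => (1:ℝ)) (x + n • α))
      - N * (volume A).toReal| ≤ C

end


noncomputable section

/-- The vector `α' = (α, 1) ∈ ℝ^{s+1}`. -/
def alphaExt (s : ℕ) (α : Fin s → ℝ) : Fin (s+1) → ℝ := Fin.snoc α 1

/-- The lattice `Λ ⊆ ℝ^{s+1}` generated by `(α,1)` and `e_1, …, e_s`. -/
def Lam (s : ℕ) (α : Fin s → ℝ) : Set (Fin (s+1) → ℝ) :=
  {x | ∃ (n : ℤ) (a : Fin s → ℤ),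
    x = (n : ℝ) • alphaExt s α + Fin.snoc (fun i => (a i : ℝ)) 0}

/-- Projection `φ : ℝ^{s+1} → ℝ^s` to the first `s` coordinates. -/
def phiProj (s : ℕ) (x : Fin (s+1) → ℝ) : Fin s → ℝ := fun i => x i.castSucc

/-- Half-open parallelotope generated by `v_1, …, v_m`. -/
def Ptope {m : ℕ} {E : Type*} [AddCommMonoid E] [Module ℝ E]
    (v : Fin m → E) : Set E :=
  {x | ∃ t : Fin m → ℝ, (∀ i, 0 ≤ t i ∧ t i < 1) ∧ x = ∑ i, t i • v i}

/-- The set of `ℤ`-linear combinations of a family of vectors. -/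
def zSpanSet {m : ℕ} {E : Type*} [AddCommMonoid E] [Module ℝ E]
    (v : Fin m → E) : Set E :=
  {x | ∃ c : Fin m → ℤ, x = ∑ i, (c i : ℝ) • v i}

/-- The special region associated to a basis `v` of `Λ`:
`A = φ(P(v_1,…,v_s))` (condition (S1)). -/
def specialRegionOf (s : ℕ) (v : Fin (s+1) → (Fin (s+1) → ℝ)) : Set (Fin s → ℝ) :=
  (phiProj s) '' (Ptope (fun i : Fin s => v i.castSucc))

/-- Conditions (S2)-(S4) making `v` a basis defining a special region for `α`. -/
def IsSpecialBasis (s : ℕ) (α : Fin s → ℝ) (v : Fin (s+1) → (Fin (s+1) → ℝ)) : Prop :=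
  (phiProj s (v (Fin.last s)) ∈ specialRegionOf s v) ∧
  (zSpanSet v = Lam s α) ∧
  (∀ I : Finset (Fin s),
    0 < v (Fin.last s) (Fin.last s) - ∑ i ∈ I, v i.castSucc (Fin.last s))

/-- `A` is a special region for `α`. -/
def IsSpecialRegion (s : ℕ) (α : Fin s → ℝ) (A : Set (Fin s → ℝ)) : Prop :=
  ∃ v : Fin (s+1) → (Fin (s+1) → ℝ), IsSpecialBasis s α v ∧ A = specialRegionOf s v

/-- The affine hyperplane `H_k = span(v_1,…,v_s) + k v_{s+1}`. -/
def Hplane (s : ℕ) (v : Fin (s+1) → (Fin (s+1) → ℝ)) (k : ℤ) : Set (Fin (s+1) → ℝ) :=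
  {x | ∃ c : Fin s → ℝ, x = (∑ i, c i • v i.castSucc) + (k : ℝ) • v (Fin.last s)}

end
/-!
Write `m i = φ(v_i)` for `i ≤ s` and `β = φ(v_{s+1}) = ∑ b_i m_i` with `b ∈ [0,1)^s` (S2). Total
irrationality makes the `m i` linearly independent, so a point of `A` has unique coordinates
`t ∈ [0,1)^s`. A point of `Λ` of height `n` projects to `n α` modulo `ℤ^s`, and every `v_i` has an
integral height `N_i`. Writing the lattice point that realises the return `x ↦ y` as
`∑ c_i v_i + k v_{s+1}` gives `y = x + ∑ c_i m_i + k β`, hence `c_i = -⌊t_i + k b_i⌋` and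
`r = F(k)` where `F(j) = j N_{s+1} - ∑ N_i ⌊t_i + j b_i⌋`. Conversely the orbit of `x` visits `A`
at every time `F(j)`, and by (S4) `F` is strictly increasing with `F(0) = 0`. Minimality of `r`
therefore forces `k = 1`, that is `y ≡ x + β mod M`.
-/

noncomputable section

variable {s : ℕ}

def phiProjₗ (s : ℕ) : (Fin (s+1) → ℝ) →ₗ[ℝ] (Fin s → ℝ) := LinearMap.funLeft ℝ ℝ Fin.castSucc

@[simp]
lemma phiProjₗ_apply (x : Fin (s+1) → ℝ) : phiProjₗ s x = phiProj s x := rfl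

lemma eq_smul_single_last_of_phiProj_eq_zero {w : Fin (s+1) → ℝ} (h : phiProj s w = 0) :
    w = w (Fin.last s) • Pi.single (Fin.last s) 1 := by
  funext i
  induction i using Fin.lastCases with
  | last => simp
  | cast j => simpa [(Fin.castSucc_lt_last j).ne, phiProj] using congrFun h j

lemma image_Ptope {m : ℕ} {E F : Type*} [AddCommGroup E] [Module ℝ E] [AddCommGroup F]
    [Module ℝ F] (f : E →ₗ[ℝ] F) (v : Fin m → E) : f '' Ptope v = Ptope (f ∘ v) := by
  ext x
  constructor
  · rintro ⟨_, ⟨t, ht, rfl⟩, rfl⟩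
    exact ⟨t, ht, by simp [map_sum]⟩
  · rintro ⟨t, ht, rfl⟩
    exact ⟨_, ⟨t, ht, rfl⟩, by simp [map_sum]⟩

lemma specialRegionOf_eq_Ptope (v : Fin (s+1) → (Fin (s+1) → ℝ)) :
    specialRegionOf s v = Ptope (fun i : Fin s => phiProj s (v i.castSucc)) :=
  image_Ptope (phiProjₗ s) _

lemma mem_zSpanSet_self {m : ℕ} {E : Type*} [AddCommGroup E] [Module ℝ E] (v : Fin m → E)
    (i : Fin m) : v i ∈ zSpanSet v :=
  ⟨Pi.single i 1, by simp [Pi.single_apply]⟩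

lemma zSpanSet_subset_span {m : ℕ} {E : Type*} [AddCommGroup E] [Module ℝ E] (v : Fin m → E) :
    zSpanSet v ⊆ Submodule.span ℝ (Set.range v) := by
  rintro x ⟨c, rfl⟩
  exact Submodule.sum_mem _ fun i _ => Submodule.smul_mem _ _ (Submodule.subset_span ⟨i, rfl⟩)

section Lattice

variable {α : Fin s → ℝ}

@[simp]
lemma phiProj_smul_alphaExt_add_snoc (n : ℤ) (a : Fin s → ℤ) :
    phiProj s ((n : ℝ) • alphaExt s α + Fin.snoc (fun i => (a i : ℝ)) 0) =
      (n : ℝ) • α + intVec s a := by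
  funext i
  simp [phiProj, alphaExt, intVec]

@[simp]
lemma smul_alphaExt_add_snoc_last (n : ℤ) (a : Fin s → ℤ) :
    ((n : ℝ) • alphaExt s α + Fin.snoc (fun i => (a i : ℝ)) 0 : Fin (s+1) → ℝ) (Fin.last s) =
      n := by
  simp [alphaExt]

lemma alphaExt_mem_Lam : alphaExt s α ∈ Lam s α :=
  ⟨1, 0, by funext i; induction i using Fin.lastCases <;> simp⟩

lemma single_castSucc_mem_Lam (j : Fin s) : Pi.single j.castSucc 1 ∈ Lam s α := by
  refine ⟨0, Pi.single j 1, ?_⟩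
  funext i
  induction i using Fin.lastCases with
  | last => simp [(Fin.castSucc_lt_last j).ne']
  | cast i => simp [Pi.single_apply]

lemma alphaExt_eq_sum_single :
    alphaExt s α = ∑ j, α j • Pi.single j.castSucc 1 + Pi.single (Fin.last s) 1 := by
  funext i
  induction i using Fin.lastCases with
  | last => simp [alphaExt, (Fin.castSucc_lt_last _).ne]
  | cast i => simp [alphaExt, Pi.single_apply, (Fin.castSucc_lt_last i).ne]

lemma span_Lam_eq_top : Submodule.span ℝ (Lam s α) = ⊤ := by
  have hsingle : ∀ i, Pi.single i 1 ∈ Submodule.span ℝ (Lam s α) := by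
    intro i
    induction i using Fin.lastCases with
    | last =>
      rw [eq_sub_of_add_eq' alphaExt_eq_sum_single.symm]
      exact Submodule.sub_mem _ (Submodule.subset_span alphaExt_mem_Lam) <|
        Submodule.sum_mem _ fun j _ =>
          Submodule.smul_mem _ _ (Submodule.subset_span (single_castSucc_mem_Lam j))
    | cast j => exact Submodule.subset_span (single_castSucc_mem_Lam j)
  refine Submodule.eq_top_iff'.mpr fun x => ?_
  rw [pi_eq_sum_univ' x]
  exact Submodule.sum_mem _ fun i _ => Submodule.smul_mem _ _ (hsingle i)

lemma TotallyIrrational.linearMap_eq_zero (hα : TotallyIrrational s α)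
    (ℓ : (Fin (s+1) → ℝ) →ₗ[ℝ] ℝ) (hℓ : ∀ z ∈ Lam s α, ∃ n : ℤ, ℓ z = n)
    (hε : ℓ (Pi.single (Fin.last s) 1) = 0) : ℓ = 0 := by
  choose d hd using fun j : Fin s => hℓ _ (single_castSucc_mem_Lam j)
  obtain ⟨g, hg⟩ := hℓ _ alphaExt_mem_Lam
  rw [alphaExt_eq_sum_single, map_add, map_sum, hε] at hg
  simp only [map_smul, hd, smul_eq_mul, add_zero] at hg
  obtain ⟨hd0, -⟩ := hα d (-g) (by push_cast; rw [← hg]; simp [mul_comm])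
  refine LinearMap.pi_ext fun i x => ?_
  rw [← mul_one x, ← smul_eq_mul, Pi.single_smul', map_smul]
  induction i using Fin.lastCases with
  | last => simp [hε]
  | cast j => simp [hd, hd0]

end Lattice

section SpecialBasis

variable {α : Fin s → ℝ} {v : Fin (s+1) → (Fin (s+1) → ℝ)}

lemma top_le_span_of_zSpanSet_eq (hΛ : zSpanSet v = Lam s α) :
    ⊤ ≤ Submodule.span ℝ (Set.range v) := by
  rw [← span_Lam_eq_top (α := α), ← hΛ]
  exact Submodule.span_le.mpr (zSpanSet_subset_span v)

lemma exists_height_of_zSpanSet_eq (hΛ : zSpanSet v = Lam s α) :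
    ∃ (N : Fin (s+1) → ℤ) (a : Fin (s+1) → Fin s → ℤ), ∀ i,
      v i (Fin.last s) = N i ∧ phiProj s (v i) = (N i : ℝ) • α + intVec s (a i) := by
  choose N a hNa using fun i => (hΛ ▸ mem_zSpanSet_self v i : v i ∈ Lam s α)
  refine ⟨N, a, fun i => ⟨?_, by rw [hNa, phiProj_smul_alphaExt_add_snoc]⟩⟩
  simp [hNa, alphaExt]

lemma sum_height_lt (hS4 : ∀ I : Finset (Fin s),
      0 < v (Fin.last s) (Fin.last s) - ∑ i ∈ I, v i.castSucc (Fin.last s))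
    {N : Fin (s+1) → ℤ} (hN : ∀ i, v i (Fin.last s) = N i) (I : Finset (Fin s)) :
    ∑ i ∈ I, N i.castSucc < N (Fin.last s) := by
  have h := hS4 I
  simp only [hN, sub_pos] at h
  exact_mod_cast h

lemma linearIndependent_phiProj (hα : TotallyIrrational s α) (hΛ : zSpanSet v = Lam s α) :
    LinearIndependent ℝ (fun i : Fin s => phiProj s (v i.castSucc)) := by
  let B := basisOfTopLeSpanOfCardEqFinrank v (top_le_span_of_zSpanSet_eq hΛ) (by simp)
  have hB : ⇑B = v := coe_basisOfTopLeSpanOfCardEqFinrank _ _ _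
  -- the `v_{s+1}`-coordinate is integral on `Λ`, so by total irrationality it does not vanish on
  -- `ker φ = ℝ e_{s+1}`, while it does vanish on `v_1, …, v_s`
  let ℓ := B.coord (Fin.last s)
  have hℓ : ∀ i, ℓ (v i) = if i = Fin.last s then 1 else 0 := by
    intro i
    simp [ℓ, ← hB, Finsupp.single_apply]
  have hε : ℓ (Pi.single (Fin.last s) 1) ≠ 0 := by
    intro h
    have hint : ∀ z ∈ Lam s α, ∃ n : ℤ, ℓ z = n := by
      rintro z hz
      rw [← hΛ] at hz
      obtain ⟨c, rfl⟩ := hz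
      exact ⟨c (Fin.last s), by simp [map_sum, hℓ]⟩
    simpa [hα.linearMap_eq_zero ℓ hint h] using hℓ (Fin.last s)
  have hind : LinearIndependent ℝ (v ∘ Fin.castSucc) := by
    rw [← hB]
    exact B.linearIndependent.comp _ (Fin.castSucc_injective s)
  refine hind.map (f := phiProjₗ s) (Submodule.disjoint_def.mpr fun w hw hker => ?_)
  have hℓw : ℓ w = 0 := by
    refine Submodule.span_le (p := LinearMap.ker ℓ) |>.mpr ?_ hw
    rintro _ ⟨i, rfl⟩
    simp [hℓ, (Fin.castSucc_lt_last i).ne]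
  rw [eq_smul_single_last_of_phiProj_eq_zero hker] at hℓw ⊢
  rw [map_smul, smul_eq_mul, mul_eq_zero] at hℓw
  simp [hℓw.resolve_right hε]

lemma exists_return_coords (hα : TotallyIrrational s α) (hΛ : zSpanSet v = Lam s α)
    {N : Fin (s+1) → ℤ} (hN : ∀ i, v i (Fin.last s) = N i) {t u b : Fin s → ℝ}
    (hβ : phiProj s (v (Fin.last s)) = ∑ i, b i • phiProj s (v i.castSucc))
    {r : ℕ} {mv : Fin s → ℤ}
    (hxy : ∑ i, t i • phiProj s (v i.castSucc) + r • α =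
      ∑ i, u i • phiProj s (v i.castSucc) + intVec s mv) :
    ∃ c : Fin (s+1) → ℤ, (r : ℤ) = ∑ i, c i * N i ∧
      ∀ i, u i = t i + c i.castSucc + c (Fin.last s) * b i := by
  obtain ⟨c, hc⟩ : ((r : ℤ) : ℝ) • alphaExt s α + Fin.snoc (fun i => ((-mv i : ℤ) : ℝ)) 0
      ∈ zSpanSet v := hΛ ▸ ⟨r, -mv, rfl⟩
  refine ⟨c, ?_, ?_⟩
  · have hlast := congrFun hc (Fin.last s)
    simp only [smul_alphaExt_add_snoc_last, Finset.sum_apply, Pi.smul_apply, hN,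
      smul_eq_mul] at hlast
    exact_mod_cast hlast
  have hcφ := congrArg (phiProjₗ s) hc
  have hmv : intVec s (-mv) = -intVec s mv := by
    funext
    simp [intVec]
  simp only [phiProjₗ_apply, phiProj_smul_alphaExt_add_snoc, map_sum, map_smul] at hcφ
  rw [Fin.sum_univ_castSucc, hβ, Int.cast_natCast, ← Pi.neg_def, hmv] at hcφ
  rw [← Nat.cast_smul_eq_nsmul ℝ] at hxy
  refine (linearIndependent_phiProj hα hΛ).eq_coords_of_eq ?_
  simp only [add_smul, mul_smul, Finset.sum_add_distrib, ← Finset.smul_sum]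
  linear_combination (norm := module) hcφ - hxy

end SpecialBasis

section HitTime

variable {ι : Type*} [Fintype ι]

/-- The time `n` at which the orbit `x + n α` of `x = ∑ t i • m i` meets `x + j β` modulo `M`,
where `β = ∑ b i • m i` and `N₀`, `N` are the heights of `v_{s+1}` and of the `v_i`. -/
def hitTime (N₀ : ℤ) (N : ι → ℤ) (t b : ι → ℝ) (j : ℤ) : ℤ :=
  j * N₀ - ∑ i, N i * ⌊t i + j * b i⌋

lemma floor_add_eq_or_of_mem_Ico (x : ℝ) {b : ℝ} (hb : b ∈ Set.Ico 0 1) :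
    ⌊x + b⌋ = ⌊x⌋ ∨ ⌊x + b⌋ = ⌊x⌋ + 1 := by
  have h₁ := Int.floor_le_floor (show x ≤ x + b by linarith [hb.1])
  have h₂ := Int.floor_le_floor (show x + b ≤ x + 1 by linarith [hb.2])
  rw [Int.floor_add_one] at h₂
  omega

variable {N₀ : ℤ} {N : ι → ℤ} {t b : ι → ℝ}

lemma hitTime_zero (ht : ∀ i, t i ∈ Set.Ico 0 1) : hitTime N₀ N t b 0 = 0 := by
  simp [hitTime, Int.floor_eq_zero_iff.mpr (ht _)]

lemma hitTime_strictMono (hN : ∀ I : Finset ι, ∑ i ∈ I, N i < N₀)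
    (hb : ∀ i, b i ∈ Set.Ico 0 1) : StrictMono (hitTime N₀ N t b) := by
  classical
  refine strictMono_int_of_lt_succ fun j => ?_
  let I := Finset.univ.filter fun i => ⌊t i + (j + 1 : ℤ) * b i⌋ = ⌊t i + j * b i⌋ + 1
  have hstep : ∀ i, N i * ⌊t i + (j + 1 : ℤ) * b i⌋ =
      N i * ⌊t i + j * b i⌋ + if i ∈ I then N i else 0 := by
    intro i
    have hsplit : t i + (j + 1 : ℤ) * b i = (t i + j * b i) + b i := by push_cast; ring
    simp only [I, Finset.mem_filter, Finset.mem_univ, true_and, hsplit]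
    rcases floor_add_eq_or_of_mem_Ico (t i + j * b i) (hb i) with h | h <;> simp [h, mul_add]
  have hsucc : hitTime N₀ N t b (j + 1) = hitTime N₀ N t b j + (N₀ - ∑ i ∈ I, N i) := by
    simp only [hitTime, hstep, Finset.sum_add_distrib, Finset.sum_ite_mem, Finset.univ_inter]
    ring
  linarith [hN I]

lemma hitTime_one_pos (ht : ∀ i, t i ∈ Set.Ico 0 1) (hN : ∀ I : Finset ι, ∑ i ∈ I, N i < N₀)
    (hb : ∀ i, b i ∈ Set.Ico 0 1) : 0 < hitTime N₀ N t b 1 :=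
  hitTime_zero ht ▸ hitTime_strictMono hN hb zero_lt_one

lemma eq_one_of_hitTime_eq_of_le (ht : ∀ i, t i ∈ Set.Ico 0 1)
    (hN : ∀ I : Finset ι, ∑ i ∈ I, N i < N₀) (hb : ∀ i, b i ∈ Set.Ico 0 1) {k r : ℤ}
    (hr : 0 < r) (hk : hitTime N₀ N t b k = r) (hle : r ≤ hitTime N₀ N t b 1) : k = 1 := by
  have hmono : StrictMono (hitTime N₀ N t b) := hitTime_strictMono hN hb
  have hk_le : k ≤ 1 := hmono.le_iff_le.mp (hk ▸ hle)
  have hk_pos : 0 < k := hmono.lt_iff_lt.mp (by rwa [hitTime_zero ht, hk])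
  omega

lemma hitTime_eq_of_add_mem_Ico {u : ι → ℝ} (hu : ∀ i, u i ∈ Set.Ico 0 1) {c : ι → ℤ} {k : ℤ}
    (huc : ∀ i, u i = t i + c i + k * b i) :
    hitTime N₀ N t b k = k * N₀ + ∑ i, c i * N i := by
  have hfloor : ∀ i, ⌊t i + k * b i⌋ = -c i := by
    intro i
    rw [Int.floor_eq_iff]
    push_cast
    constructor <;> linarith [(hu i).1, (hu i).2, huc i]
  simp only [hitTime, hfloor]
  simp [mul_comm]

end HitTime

lemma intVec_zsmul_sub_sum {n : ℕ} (j : ℤ) (a₀ : Fin s → ℤ) (c : Fin n → ℤ)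
    (a : Fin n → Fin s → ℤ) :
    intVec s (j • a₀ - ∑ i, c i • a i) =
      (j : ℝ) • intVec s a₀ - ∑ i, (c i : ℝ) • intVec s (a i) := by
  funext k
  simp [intVec, Finset.sum_apply]

lemma modMem_add_hitTime {n : ℕ} {m : Fin n → (Fin s → ℝ)} {α : Fin s → ℝ} {N₀ : ℤ}
    {N : Fin n → ℤ} {a₀ : Fin s → ℤ} {a : Fin n → Fin s → ℤ} {b : Fin n → ℝ}
    (hm : ∀ i, m i = (N i : ℝ) • α + intVec s (a i))
    (hb : ∑ i, b i • m i = (N₀ : ℝ) • α + intVec s a₀) (t : Fin n → ℝ) (j : ℤ) :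
    ModMem s (∑ i, t i • m i + (hitTime N₀ N t b j : ℝ) • α) (Ptope m) := by
  set c : Fin n → ℤ := fun i => ⌊t i + j * b i⌋
  refine ⟨j • a₀ - ∑ i, c i • a i, fun i => Int.fract (t i + j * b i),
    fun i => ⟨Int.fract_nonneg _, Int.fract_lt_one _⟩, ?_⟩
  have hc : ∑ i, (c i : ℝ) • m i =
      ((∑ i, N i * c i : ℤ) : ℝ) • α + ∑ i, (c i : ℝ) • intVec s (a i) := by
    simp only [hm, smul_add, smul_smul, Finset.sum_add_distrib, ← Finset.sum_smul]
    push_cast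
    simp only [mul_comm]
  calc
    ∑ i, t i • m i + (hitTime N₀ N t b j : ℝ) • α + intVec s (j • a₀ - ∑ i, c i • a i)
      = ∑ i, t i • m i + (j : ℝ) • ∑ i, b i • m i - ∑ i, (c i : ℝ) • m i := by
        rw [hb, hc, intVec_zsmul_sub_sum, hitTime]
        push_cast
        module
    _ = ∑ i, Int.fract (t i + j * b i) • m i := by
        simp only [Int.fract, sub_smul, add_smul, Finset.sum_sub_distrib, Finset.sum_add_distrib,
          mul_smul, ← Finset.smul_sum, c]

/-- For a special region `A` for `α` with lattice `M` generated by
`φ(v_1),…,φ(v_s)` and `β = φ(v_{s+1})`, every point `x ∈ A` (not only the orbit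
of `0`) satisfies `S(x) ≡ x + β mod M` for the first return map `S` of the
rotation by `α` to `A`. -/
theorem first_return_is_translation_mod_M
    (s : ℕ) (α : Fin s → ℝ) (hα : TotallyIrrational s α)
    (v : Fin (s+1) → (Fin (s+1) → ℝ)) (hv : IsSpecialBasis s α v)
    (A : Set (Fin s → ℝ)) (hA : A = specialRegionOf s v) :
    ∀ x ∈ A, ∀ r : ℕ, 0 < r →
      (∀ n : ℕ, 0 < n → n < r → ¬ ModMem s (x + n • α) A) →
      ModMem s (x + r • α) A →
      -- `y ∈ A` is the representative of `S x = x + r α` in `A`: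
      ∀ y ∈ A, (∃ mv : Fin s → ℤ, x + r • α = y + intVec s mv) →
        y - (x + phiProj s (v (Fin.last s)))
          ∈ zSpanSet (fun i : Fin s => phiProj s (v i.castSucc)) := by
  obtain ⟨hβ, hΛ, hS4⟩ := hv
  subst hA
  rw [specialRegionOf_eq_Ptope] at hβ ⊢
  intro x hx r hr hmin _ y hy ⟨mv, hxy⟩
  obtain ⟨t, ht, rfl⟩ := hx
  obtain ⟨u, hu, rfl⟩ := hy
  obtain ⟨b, hb, hβb⟩ := hβ
  obtain ⟨N, a, hNa⟩ := exists_height_of_zSpanSet_eq hΛ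
  have hN := sum_height_lt hS4 fun i => (hNa i).1
  obtain ⟨c, hrc, hcoef⟩ := exists_return_coords hα hΛ (fun i => (hNa i).1) hβb hxy
  set F := hitTime (N (Fin.last s)) (fun i => N i.castSucc) t b
  have hFc : F (c (Fin.last s)) = r := by
    rw [show F _ = _ from hitTime_eq_of_add_mem_Ico hu hcoef, hrc, Fin.sum_univ_castSucc]
    ring
  have hr_le : (r : ℤ) ≤ F 1 := by
    have hF1 : 0 < F 1 := hitTime_one_pos ht hN hb
    by_contra hlt
    refine hmin (F 1).toNat (by omega) (by omega) ?_
    rw [← Nat.cast_smul_eq_nsmul ℝ, show (((F 1).toNat : ℕ) : ℝ) = F 1 by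
      exact_mod_cast Int.toNat_of_nonneg hF1.le]
    exact modMem_add_hitTime (fun i => (hNa _).2) (hβb ▸ (hNa _).2) t 1
  have hk : c (Fin.last s) = 1 :=
    eq_one_of_hitTime_eq_of_le ht hN hb (by exact_mod_cast hr) hFc hr_le
  refine ⟨fun i => c i.castSucc, ?_⟩
  simp only [hβb, hcoef, hk, Int.cast_one, one_mul, add_smul, Finset.sum_add_distrib]
  abel

end
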